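/- Fix constants $K > 0$ and $z_0 > 0$, and for each $y \in \mathbb{R}$ define $K_y : [0,z_0] \to \mathbb{R}$ by: for $y < 0$, $K_y(\zeta) = K + \frac{yK}{z_0}\zeta$ if $0 \le \zeta < \frac{z_0}{1-y}$ and $K_y(\zeta) = \frac{K}{1-y}$ if $\frac{z_0}{1-y} \le \zeta \le z_0$; for $y \ge 0$, $K_y(\zeta) = K + y\zeta$. For $\alpha > 0$, let $y(\alpha)$ denote the unique real number $y$ such that $\int_0^{z_0} K_y(\zeta)\, d\zeta = \alpha$, and define $f : [0,z_0] \to \mathbb{R}$ by $f(z) = 1 + \alpha z - \int_0^z \int_0^\zeta K_{y(\alpha)}(\xi)\, d\xi\, d\zeta$. Then $f'(z) = \alpha - \int_0^z K_{y(\alpha)}(\xi)\,d\xi \ge 0$ for all $z \in [0,z_0]$, $f'(z_0) = 0$, $f'(0) = \alpha$, and $f(z) \ge 1$ for all $z \in [0,z_0]$. -/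
import Mathlib


/-- The curvature-profile family from the extension procedure. -/
noncomputable def Kfam (K z₀ y ζ : ℝ) : ℝ :=
  if y < 0 then
    if ζ < z₀ / (1 - y) then K + y * K / z₀ * ζ else K / (1 - y)
  else K + y * ζ

open MeasureTheory intervalIntegral

lemma Kfam_cont (K z₀ y : ℝ) (hz₀ : 0 < z₀) : Continuous (Kfam K z₀ y) := by
  unfold Kfam
  by_cases hy : y < 0
  · simp only [if_pos hy]
    have h1y : (0:ℝ) < 1 - y := by linarith
    have heq : (fun ζ : ℝ => if ζ < z₀ / (1 - y) then K + y * K / z₀ * ζ else K / (1 - y))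
        = fun ζ : ℝ => if ζ ≤ z₀ / (1 - y) then K + y * K / z₀ * ζ else K / (1 - y) := by
      funext ζ
      rcases lt_trichotomy ζ (z₀ / (1 - y)) with h | h | h
      · rw [if_pos h, if_pos h.le]
      · subst h
        rw [if_neg (lt_irrefl _), if_pos le_rfl]
        field_simp
        ring
      · rw [if_neg (not_lt.mpr h.le), if_neg (not_le.mpr h)]
    rw [heq]
    apply Continuous.if_le (by continuity) continuous_const continuous_id continuous_const
    intro x hx
    subst hx
    field_simp
    ring
  · simp only [if_neg hy]
    continuity

lemma Kfam_nonneg (K z₀ y ζ : ℝ) (hK : 0 < K) (hz₀ : 0 < z₀) (hζ : 0 ≤ ζ) :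
    0 ≤ Kfam K z₀ y ζ := by
  unfold Kfam
  by_cases hy : y < 0
  · simp only [if_pos hy]
    have h1y : (0:ℝ) < 1 - y := by linarith
    by_cases h : ζ < z₀ / (1 - y)
    · rw [if_pos h]
      have h2 : ζ * (1 - y) < z₀ := by
        rwa [lt_div_iff₀ h1y] at h
      have : K + y * K / z₀ * ζ = (K * z₀ + y * K * ζ) / z₀ := by field_simp
      rw [this]
      apply div_nonneg _ hz₀.le
      nlinarith
    · rw [if_neg h]
      positivity
  · simp only [if_neg hy]
    push_neg at hy
    nlinarith

/-- Properties of the warping function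
`f(z) = 1 + α z - ∫₀ᶻ ∫₀^ζ K_{y(α)}(ξ) dξ dζ`:
`f'(z) = α - ∫₀ᶻ K_{y(α)} ≥ 0` on `[0,z₀]`, `f'(z₀) = 0`, `f'(0) = α`, and
`f ≥ 1` on `[0,z₀]`. -/
theorem stmt_10 (K z₀ : ℝ) (hK : 0 < K) (hz₀ : 0 < z₀)
    (α : ℝ) (hα : 0 < α) (y : ℝ)
    (hy : (∫ ζ in (0:ℝ)..z₀, Kfam K z₀ y ζ) = α)
    (f : ℝ → ℝ)
    (hf : ∀ z : ℝ, f z =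
      1 + α * z - ∫ ζ in (0:ℝ)..z, ∫ ξ in (0:ℝ)..ζ, Kfam K z₀ y ξ) :
    (∀ z ∈ Set.Icc (0:ℝ) z₀,
      HasDerivWithinAt f (α - ∫ ξ in (0:ℝ)..z, Kfam K z₀ y ξ)
        (Set.Icc 0 z₀) z ∧
      0 ≤ α - (∫ ξ in (0:ℝ)..z, Kfam K z₀ y ξ) ∧
      1 ≤ f z) ∧
    α - (∫ ξ in (0:ℝ)..z₀, Kfam K z₀ y ξ) = 0 ∧
    α - (∫ ξ in (0:ℝ)..(0:ℝ), Kfam K z₀ y ξ) = α := by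
  have contK := Kfam_cont K z₀ y hz₀
  have intK : ∀ a b : ℝ, IntervalIntegrable (Kfam K z₀ y) volume a b :=
    fun a b => contK.intervalIntegrable a b
  set G : ℝ → ℝ := fun ζ => ∫ ξ in (0:ℝ)..ζ, Kfam K z₀ y ξ with hG
  have hGle : ∀ z ∈ Set.Icc (0:ℝ) z₀, G z ≤ α := by
    intro z hz
    rw [← hy, ← intervalIntegral.integral_add_adjacent_intervals (intK 0 z) (intK z z₀)]
    have h0 : 0 ≤ ∫ ξ in z..z₀, Kfam K z₀ y ξ :=
      intervalIntegral.integral_nonneg hz.2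
        (fun u hu => Kfam_nonneg K z₀ y u hK hz₀ (le_trans hz.1 hu.1))
    simp only [hG]
    linarith
  have hGd : ∀ b : ℝ, HasDerivAt G (Kfam K z₀ y b) b := fun b =>
    intervalIntegral.integral_hasDerivAt_right (intK 0 b)
      (contK.stronglyMeasurable.stronglyMeasurableAtFilter) contK.continuousAt
  have hGcont : Continuous G := continuous_iff_continuousAt.mpr fun b => (hGd b).continuousAt
  have intG : ∀ a b : ℝ, IntervalIntegrable G volume a b :=
    fun a b => hGcont.intervalIntegrable a b
  have hfeq : f = fun z => 1 + α * z - ∫ ζ in (0:ℝ)..z, G ζ := funext hf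
  refine ⟨fun z hz => ⟨?_, ?_, ?_⟩, by rw [hy]; ring, by simp⟩
  · rw [hfeq]
    have hFd : HasDerivAt (fun u => ∫ ζ in (0:ℝ)..u, G ζ) (G z) z :=
      intervalIntegral.integral_hasDerivAt_right (intG 0 z)
        (hGcont.stronglyMeasurable.stronglyMeasurableAtFilter) hGcont.continuousAt
    have : HasDerivAt (fun u => 1 + α * u - ∫ ζ in (0:ℝ)..u, G ζ) (α - G z) z := by
      have h1 : HasDerivAt (fun u : ℝ => 1 + α * u) (α) z := by
        simpa using ((hasDerivAt_id z).const_mul α).const_add 1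
      exact h1.sub hFd
    exact this.hasDerivWithinAt
  · have := hGle z hz
    simp only [hG] at this
    linarith
  · rw [hf z]
    have hsub : (∫ ζ in (0:ℝ)..z, (α - G ζ)) =
        α * z - ∫ ζ in (0:ℝ)..z, G ζ := by
      rw [intervalIntegral.integral_sub (intervalIntegrable_const) (intG 0 z)]
      simp [mul_comm]
    have hnn : 0 ≤ ∫ ζ in (0:ℝ)..z, (α - G ζ) :=
      intervalIntegral.integral_nonneg hz.1
        (fun u hu => sub_nonneg.mpr (hGle u ⟨hu.1, le_trans hu.2 hz.2⟩))
    simp only [hG] at hsub hnn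
    linarith
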